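/- Key elementhood lemma for dS_fde^→ completeness: let Γ be a dS_fde^→-theory and define e(A,Γ) = N if A∉Γ and ¬A∉Γ; F if A∉Γ and ¬A∈Γ; T if A∈Γ and ¬A∉Γ; B if A∈Γ and ¬A∈Γ. Then e(A∨B, Γ) = e(A,Γ) ∨ e(B,Γ), where ∨ on the right is the dS_fde^→ disjunction operation. -/
import Mathlib


inductive V4 : Type
  | T | B | N | F
deriving DecidableEq, Repr

def negS : V4 → V4
  | .T => .F
  | .B => .B
  | .N => .N
  | .F => .T

def andDA : V4 → V4 → V4
  | .T, y => y
  | .B, _ => .B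
  | .N, .T => .N
  | .N, .B => .F
  | .N, .N => .N
  | .N, .F => .F
  | .F, _ => .F

def orDA : V4 → V4 → V4
  | .T, _ => .T
  | .B, _ => .B
  | .N, .T => .T
  | .N, .B => .T
  | .N, .N => .N
  | .N, .F => .N
  | .F, y => y

inductive Fm : Type
  | var : Nat → Fm
  | neg : Fm → Fm
  | conj : Fm → Fm → Fm
  | disj : Fm → Fm → Fm

structure DTheory : Type where
  carrier : Set Fm
  proper : carrier ≠ Set.univ
  disj_elim : ∀ A B : Fm, Fm.disj A B ∈ carrier → A ∈ carrier ∨ B ∈ carrier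
  conj_elim : ∀ A B : Fm, Fm.conj A B ∈ carrier →
    (A ∈ carrier ∧ B ∈ carrier) ∨ (A ∈ carrier ∧ Fm.neg A ∈ carrier)
  nconj_elim : ∀ A B : Fm, Fm.neg (Fm.conj A B) ∈ carrier →
    Fm.neg A ∈ carrier ∨ Fm.neg B ∈ carrier
  ndisj_elim : ∀ A B : Fm, Fm.neg (Fm.disj A B) ∈ carrier →
    (Fm.neg A ∈ carrier ∧ Fm.neg B ∈ carrier) ∨ (A ∈ carrier ∧ Fm.neg A ∈ carrier)
  orI1 : ∀ A B : Fm, A ∈ carrier → Fm.disj A B ∈ carrier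
  orI2 : ∀ A B : Fm, B ∈ carrier → Fm.disj A B ∈ carrier
  andI : ∀ A B : Fm, A ∈ carrier → B ∈ carrier → Fm.conj A B ∈ carrier
  andI2 : ∀ A B : Fm, A ∈ carrier → Fm.neg A ∈ carrier → Fm.conj A B ∈ carrier
  nnI : ∀ A : Fm, A ∈ carrier → Fm.neg (Fm.neg A) ∈ carrier
  nnE : ∀ A : Fm, Fm.neg (Fm.neg A) ∈ carrier → A ∈ carrier
  nandI1 : ∀ A B : Fm, Fm.neg A ∈ carrier → Fm.neg (Fm.conj A B) ∈ carrier
  nandI2 : ∀ A B : Fm, Fm.neg B ∈ carrier → Fm.neg (Fm.conj A B) ∈ carrier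
  norI : ∀ A B : Fm, Fm.neg A ∈ carrier → Fm.neg B ∈ carrier →
    Fm.neg (Fm.disj A B) ∈ carrier
  norI2 : ∀ A B : Fm, A ∈ carrier → Fm.neg A ∈ carrier →
    Fm.neg (Fm.disj A B) ∈ carrier

open Classical in
noncomputable def elemhood (G : DTheory) (A : Fm) : V4 :=
  if A ∈ G.carrier then
    (if Fm.neg A ∈ G.carrier then V4.B else V4.T)
  else
    (if Fm.neg A ∈ G.carrier then V4.F else V4.N)


lemma disj_mem (G : DTheory) (A B : Fm) :
    Fm.disj A B ∈ G.carrier ↔ A ∈ G.carrier ∨ B ∈ G.carrier := by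
  constructor
  · exact G.disj_elim A B
  · rintro (h | h)
    · exact G.orI1 A B h
    · exact G.orI2 A B h

lemma ndisj_mem (G : DTheory) (A B : Fm) :
    Fm.neg (Fm.disj A B) ∈ G.carrier ↔
      (Fm.neg A ∈ G.carrier ∧ Fm.neg B ∈ G.carrier) ∨
      (A ∈ G.carrier ∧ Fm.neg A ∈ G.carrier) := by
  constructor
  · exact G.ndisj_elim A B
  · rintro (⟨h1, h2⟩ | ⟨h1, h2⟩)
    · exact G.norI A B h1 h2
    · exact G.norI2 A B h1 h2

theorem elemhood_disj (G : DTheory) (A B : Fm) :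
    elemhood G (Fm.disj A B) = orDA (elemhood G A) (elemhood G B) := by
  unfold elemhood
  by_cases hA : A ∈ G.carrier <;> by_cases hnA : Fm.neg A ∈ G.carrier <;>
    by_cases hB : B ∈ G.carrier <;> by_cases hnB : Fm.neg B ∈ G.carrier <;>
    simp [hA, hnA, hB, hnB, disj_mem, ndisj_mem, orDA]
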